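/- arXiv:1509.05601 — 4 statements merged into one kernel-verified Lean document; each statement's English description precedes it below -/
import Mathlib

section
/- The matrix −A₂ D^{-1} = (I − D^{-1} E (E^t D^{-1} E)^{-1} E^t) D^{-1} is symmetric positive semi-definite. -/
/-!
With `P = D⁻¹`, the matrix `-(A₂ * D⁻¹)` is `P - P E (Eᵀ P E)⁻¹ Eᵀ P`, the Schur complement of the
block `Eᵀ P E` in `[1 E]ᵀ P [1 E] = [[P, P E], [Eᵀ P, Eᵀ P E]]`. The block matrix is positive
semidefinite as a congruence of `P`, and `Eᵀ P E` is positive definite because `E` is injective,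
so the Schur complement is positive semidefinite.
-/

open Matrix

namespace Matrix

variable {m n : Type*} [Fintype n]

theorem mulVec_injective_of_rank_eq_card {K : Type*} [Field K] [Fintype m] {A : Matrix m n K}
    (hA : A.rank = Fintype.card n) : Function.Injective A.mulVec := by
  have h := A.mulVecLin.finrank_range_add_finrank_ker
  rw [← rank, hA, Module.finrank_fintype_fun_eq_card, add_eq_left,
    Submodule.finrank_eq_zero, ker_mulVecLin_eq_bot_iff] at h
  exact (injective_iff_map_eq_zero' A.mulVecLin).2 fun v => ⟨h v, fun hv => hv ▸ mulVec_zero A⟩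

theorem conjTranspose_fromCols_one_mul_mul_fromCols_one {R : Type*} [CommRing R] [StarRing R]
    [DecidableEq n] (P : Matrix n n R) (E : Matrix n m R) :
    (fromCols 1 E)ᴴ * P * fromCols 1 E = fromBlocks P (P * E) (Eᴴ * P) (Eᴴ * P * E) := by
  rw [conjTranspose_fromCols_eq_fromRows_conjTranspose, fromRows_mul, fromRows_mul_fromCols]
  simp [Matrix.mul_assoc]

theorem PosSemidef.sub_mul_inv_mul_posSemidef {R : Type*} [Field R] [PartialOrder R] [StarRing R]
    [StarOrderedRing R] [Fintype m] [DecidableEq n] [DecidableEq m]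
    {P : Matrix n n R} (hP : P.PosSemidef) {E : Matrix n m R} (hS : (Eᴴ * P * E).PosDef) :
    (P - P * E * (Eᴴ * P * E)⁻¹ * Eᴴ * P).PosSemidef := by
  have := hS.isUnit.invertible
  have hB : (P * E)ᴴ = Eᴴ * P := by rw [conjTranspose_mul, hP.1.eq]
  have hBlocks : (fromBlocks P (P * E) (P * E)ᴴ (Eᴴ * P * E)).PosSemidef := by
    rw [hB, ← conjTranspose_fromCols_one_mul_mul_fromCols_one]
    exact hP.conjTranspose_mul_mul_same _
  simpa only [hB, Matrix.mul_assoc] using (PosDef.fromBlocks₂₂ P (P * E) hS).1 hBlocks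

end Matrix

theorem neg_a2Dinv_posSemidef_general (m l : ℕ)
    (E : Matrix (Fin m) (Fin l) ℝ) (hrank : E.rank = l)
    (d : Fin m → ℝ) (hd : ∀ i, 0 < d i)
    (D : Matrix (Fin m) (Fin m) ℝ) (hD : D = Matrix.diagonal d)
    (A₂ : Matrix (Fin m) (Fin m) ℝ) (hA₂ : A₂ = D⁻¹ * E * (Eᵀ * D⁻¹ * E)⁻¹ * Eᵀ - 1) :
    (-(A₂ * D⁻¹)).PosSemidef := by
  have hDinv : D⁻¹.PosDef := (hD ▸ posDef_diagonal_iff.2 hd).inv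
  have hE : Function.Injective E.mulVec :=
    mulVec_injective_of_rank_eq_card (by rw [hrank, Fintype.card_fin])
  have hS : (Eᵀ * D⁻¹ * E).PosDef := hDinv.conjTranspose_mul_mul_same hE
  have hA : -(A₂ * D⁻¹) = D⁻¹ - D⁻¹ * E * (Eᵀ * D⁻¹ * E)⁻¹ * Eᵀ * D⁻¹ := by
    rw [hA₂]
    noncomm_ring
  rw [hA]
  exact hDinv.posSemidef.sub_mul_inv_mul_posSemidef hS

theorem neg_a2Dinv_posSemidef (m l : ℕ) (hl : 1 ≤ l) (hlm : l ≤ m)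
    (E : Matrix (Fin m) (Fin l) ℝ) (hrank : E.rank = l)
    (d : Fin m → ℝ) (hd : ∀ i, 0 < d i)
    (D : Matrix (Fin m) (Fin m) ℝ) (hD : D = Matrix.diagonal d)
    (A₂ : Matrix (Fin m) (Fin m) ℝ) (hA₂ : A₂ = D⁻¹ * E * (Eᵀ * D⁻¹ * E)⁻¹ * Eᵀ - 1) :
    (-(A₂ * D⁻¹)).PosSemidef :=
  neg_a2Dinv_posSemidef_general m l E hrank d hd D hD A₂ hA₂
end

section
/- The spectral (operator 2-)norm of A₁ D^{-1} satisfies ‖A₁ D^{-1}‖ ≤ 1 / λ_min(D). -/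
open Matrix
open scoped Matrix.Norms.L2Operator

/-!
With `S = D^{-1/2}` we have `A₁ D⁻¹ = Sᵀ P S`, where `P = B (Bᵀ B)⁻¹ Bᵀ` with `B = S E` is an
orthogonal projection. Hence `‖A₁ D⁻¹‖ ≤ ‖S‖ ‖P‖ ‖S‖ ≤ ‖S‖² = ‖Sᵀ S‖ = ‖D⁻¹‖ = 1 / λ_min(D)`
by the C⋆-identity for the operator norm.
-/

theorem CStarRing.norm_star_mul_mul_le {E : Type*} [NonUnitalNormedRing E] [StarRing E]
    [CStarRing E] (s p : E) (hp : ‖p‖ ≤ 1) : ‖star s * p * s‖ ≤ ‖star s * s‖ :=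
  calc ‖star s * p * s‖ ≤ ‖star s‖ * ‖p‖ * ‖s‖ := norm_mul₃_le
    _ ≤ ‖star s‖ * 1 * ‖s‖ := by gcongr
    _ = ‖star s * s‖ := by rw [mul_one, norm_star, CStarRing.norm_star_mul_self]

namespace Matrix

variable {m n : Type*} [Fintype m] [Fintype n] [DecidableEq n]

theorem nonsing_inv_mul_mul_nonsing_inv {R : Type*} [CommRing R] (A : Matrix n n R) :
    A⁻¹ * A * A⁻¹ = A⁻¹ := by
  by_cases h : IsUnit A.det
  · rw [nonsing_inv_mul A h, Matrix.one_mul]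
  · simp only [nonsing_inv_apply_not_isUnit A h, Matrix.mul_zero]

/-- When `Bᴴ * B` is singular its inverse is the junk value `0`, and so is the projection. -/
theorem isStarProjection_mul_inv_conjTranspose_mul_mul_conjTranspose {R : Type*} [CommRing R]
    [StarRing R] (B : Matrix m n R) : IsStarProjection (B * (Bᴴ * B)⁻¹ * Bᴴ) where
  isIdempotentElem := by
    rw [IsIdempotentElem]
    calc B * (Bᴴ * B)⁻¹ * Bᴴ * (B * (Bᴴ * B)⁻¹ * Bᴴ)
        = B * ((Bᴴ * B)⁻¹ * (Bᴴ * B) * (Bᴴ * B)⁻¹) * Bᴴ := by simp only [Matrix.mul_assoc]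
      _ = B * (Bᴴ * B)⁻¹ * Bᴴ := by rw [nonsing_inv_mul_mul_nonsing_inv, Matrix.mul_assoc]
  isSelfAdjoint := by
    simp only [IsSelfAdjoint, star_eq_conjTranspose, conjTranspose_mul, conjTranspose_nonsing_inv,
      conjTranspose_conjTranspose, Matrix.mul_assoc]

theorem l2_opNorm_weighted_projection_le {𝕜 : Type*} [RCLike 𝕜] [DecidableEq m]
    (S : Matrix m m 𝕜) (B : Matrix m n 𝕜) :
    ‖Sᴴ * S * B * (Bᴴ * (Sᴴ * S) * B)⁻¹ * Bᴴ * (Sᴴ * S)‖ ≤ ‖Sᴴ * S‖ := by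
  have hP := (isStarProjection_mul_inv_conjTranspose_mul_mul_conjTranspose (S * B)).norm_le
  have hfactor : Sᴴ * S * B * (Bᴴ * (Sᴴ * S) * B)⁻¹ * Bᴴ * (Sᴴ * S) =
      star S * (S * B * ((S * B)ᴴ * (S * B))⁻¹ * (S * B)ᴴ) * S := by
    simp only [star_eq_conjTranspose, conjTranspose_mul, Matrix.mul_assoc]
  rw [hfactor]
  exact CStarRing.norm_star_mul_mul_le S _ hP

theorem inv_diagonal_of_ne_zero {K : Type*} [Field K] (d : n → K) (hd : ∀ i, d i ≠ 0) :
    (diagonal d)⁻¹ = diagonal d⁻¹ := by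
  refine inv_eq_left_inv ?_
  rw [diagonal_mul_diagonal, ← diagonal_one]
  exact congrArg diagonal (funext fun i => inv_mul_cancel₀ (hd i))

theorem inv_diagonal_eq_conjTranspose_mul_self (d : n → ℝ) (hd : ∀ i, 0 < d i) :
    (diagonal d)⁻¹ = (diagonal fun i => (√(d i))⁻¹)ᴴ * diagonal fun i => (√(d i))⁻¹ := by
  rw [inv_diagonal_of_ne_zero d fun i => (hd i).ne', diagonal_conjTranspose, diagonal_mul_diagonal]
  refine congrArg diagonal (funext fun i => ?_)
  simp [← mul_inv, Real.mul_self_sqrt (hd i).le]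

theorem l2_opNorm_inv_diagonal_le (d : n → ℝ) (hd : ∀ i, 0 < d i) :
    ‖(diagonal d)⁻¹‖ ≤ 1 / ⨅ i, d i := by
  rw [inv_diagonal_of_ne_zero d fun i => (hd i).ne', l2_opNorm_diagonal,
    pi_norm_le_iff_of_nonneg (one_div_nonneg.2 (Real.iInf_nonneg fun i => (hd i).le))]
  intro i
  have : Nonempty n := ⟨i⟩
  obtain ⟨j, hj⟩ := Finite.exists_min d
  have hinf : ⨅ i, d i = d j := le_antisymm (ciInf_le (Finite.bddBelow_range d) j) (le_ciInf hj)
  rw [Pi.inv_apply, Real.norm_of_nonneg (inv_nonneg.2 (hd i).le), hinf, one_div]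
  exact inv_anti₀ (hd j) (hj i)

end Matrix

theorem a1Dinv_norm_le_general (m l : ℕ)
    (E : Matrix (Fin m) (Fin l) ℝ)
    (d : Fin m → ℝ) (hd : ∀ i, 0 < d i)
    (D : Matrix (Fin m) (Fin m) ℝ) (hD : D = Matrix.diagonal d)
    (A₁ : Matrix (Fin m) (Fin m) ℝ) (hA₁ : A₁ = D⁻¹ * E * (Eᵀ * D⁻¹ * E)⁻¹ * Eᵀ) :
    ‖A₁ * D⁻¹‖ ≤ 1 / (⨅ i, d i) := by
  subst hD hA₁
  have hDinv := inv_diagonal_eq_conjTranspose_mul_self d hd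
  rw [← conjTranspose_eq_transpose_of_trivial, hDinv]
  calc _ ≤ _ := l2_opNorm_weighted_projection_le _ E
    _ = ‖(diagonal d)⁻¹‖ := by rw [hDinv]
    _ ≤ 1 / ⨅ i, d i := l2_opNorm_inv_diagonal_le d hd

theorem a1Dinv_norm_le (m l : ℕ) (hl : 1 ≤ l) (hlm : l ≤ m)
    (E : Matrix (Fin m) (Fin l) ℝ) (hrank : E.rank = l)
    (d : Fin m → ℝ) (hd : ∀ i, 0 < d i)
    (D : Matrix (Fin m) (Fin m) ℝ) (hD : D = Matrix.diagonal d)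
    (A₁ : Matrix (Fin m) (Fin m) ℝ) (hA₁ : A₁ = D⁻¹ * E * (Eᵀ * D⁻¹ * E)⁻¹ * Eᵀ) :
    ‖A₁ * D⁻¹‖ ≤ 1 / (⨅ i, d i) :=
  a1Dinv_norm_le_general m l E d hd D hD A₁ hA₁
end

section
/- The spectral norm of A₁ = D^{-1} E (E^t D^{-1} E)^{-1} E^t satisfies 1 ≤ ‖A₁‖ ≤ √(λ_max(D)/λ_min(D)), where λ_max(D) and λ_min(D) are the largest and smallest diagonal entries of D. -/
open Matrix
open scoped Matrix.Norms.L2Operator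

/-!
Write `S = D^{1/2}` and `F = S⁻¹ E`. Then `Eᵀ D⁻¹ E = Fᵀ F` and `A₁ = S⁻¹ P S`, where
`P = F (Fᵀ F)⁻¹ Fᵀ` is the orthogonal projection onto the column space of `F`, so
`‖A₁‖ ≤ ‖S⁻¹‖ ‖P‖ ‖S‖ ≤ √(λ_max(D) / λ_min(D))`. For the lower bound, `A₁` is a nonzero
idempotent, and every nonzero idempotent `p` has `‖p‖ = ‖p * p‖ ≤ ‖p‖²`.
-/

theorem IsIdempotentElem.one_le_norm {R : Type*} [NonUnitalNormedRing R] {p : R}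
    (hp : IsIdempotentElem p) (hp0 : p ≠ 0) : 1 ≤ ‖p‖ := by
  have hle : 1 * ‖p‖ ≤ ‖p‖ * ‖p‖ := by simpa [hp.eq] using norm_mul_le p p
  exact le_of_mul_le_mul_right hle (norm_pos_iff.mpr hp0)

namespace Matrix

variable {m n K R : Type*} [Fintype m] [Fintype n] [DecidableEq n]

theorem isUnit_of_rank_eq_card [Field K] {A : Matrix n n K} (h : A.rank = Fintype.card n) :
    IsUnit A := by
  rw [← mulVec_surjective_iff_isUnit, ← coe_mulVecLin, ← LinearMap.range_eq_top]
  apply Submodule.eq_top_of_finrank_eq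
  rw [← Matrix.rank, h, Module.finrank_fintype_fun_eq_card]

section ObliqueProj

variable [CommRing R]

/-- The projection onto the columns of `B` along the kernel of `C` when `C * B` is invertible;
since `⁻¹` is `0` on singular matrices, it is `0` otherwise. -/
noncomputable def obliqueProj (B : Matrix m n R) (C : Matrix n m R) : Matrix m m R :=
  B * (C * B)⁻¹ * C

theorem isIdempotentElem_obliqueProj (B : Matrix m n R) (C : Matrix n m R) :
    IsIdempotentElem (obliqueProj B C) := by
  by_cases h : IsUnit (C * B).det
  · calc obliqueProj B C * obliqueProj B C
          = B * ((C * B)⁻¹ * (C * B)) * (C * B)⁻¹ * C := by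
            simp only [obliqueProj, Matrix.mul_assoc]
      _ = obliqueProj B C := by rw [nonsing_inv_mul _ h, Matrix.mul_one, obliqueProj]
  · simp [obliqueProj, nonsing_inv_apply_not_isUnit _ h, IsIdempotentElem]

theorem obliqueProj_mul_self {B : Matrix m n R} {C : Matrix n m R} (h : IsUnit (C * B).det) :
    obliqueProj B C * B = B := by
  rw [obliqueProj, Matrix.mul_assoc, nonsing_inv_mul_cancel_right _ _ h]

theorem obliqueProj_ne_zero [Nontrivial R] [Nonempty n] {B : Matrix m n R} {C : Matrix n m R}
    (h : IsUnit (C * B).det) : obliqueProj B C ≠ 0 := by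
  intro h0
  have hB : B = 0 := by rw [← obliqueProj_mul_self h, h0, Matrix.zero_mul]
  simp [hB] at h

theorem obliqueProj_conj [DecidableEq m] {S : Matrix m m R} (hS : IsUnit S.det) (B : Matrix m n R)
    (C : Matrix n m R) : obliqueProj (S⁻¹ * B) (C * S) = S⁻¹ * obliqueProj B C * S := by
  simp only [obliqueProj, Matrix.mul_assoc, mul_nonsing_inv_cancel_left _ _ hS]

theorem isStarProjection_obliqueProj_conjTranspose [StarRing R] (B : Matrix m n R) :
    IsStarProjection (obliqueProj B Bᴴ) where
  isIdempotentElem := isIdempotentElem_obliqueProj B Bᴴ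
  isSelfAdjoint := by
    simp only [IsSelfAdjoint, obliqueProj, star_eq_conjTranspose, conjTranspose_mul,
      conjTranspose_nonsing_inv, conjTranspose_conjTranspose, Matrix.mul_assoc]

end ObliqueProj

end Matrix

section SqrtDiagonal

variable {m : Type*} [Fintype m] [DecidableEq m] {d : m → ℝ}

theorem isUnit_det_diagonal_sqrt (hd : ∀ i, 0 < d i) :
    IsUnit (diagonal fun i => √(d i)).det := by
  rw [det_diagonal]
  exact (Finset.prod_pos fun i _ => Real.sqrt_pos.mpr (hd i)).ne'.isUnit

theorem inv_diagonal_sqrt (hd : ∀ i, 0 < d i) :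
    (diagonal fun i => √(d i))⁻¹ = diagonal fun i => (√(d i))⁻¹ := by
  refine inv_eq_left_inv ?_
  rw [diagonal_mul_diagonal, ← diagonal_one]
  exact congrArg diagonal (funext fun i => inv_mul_cancel₀ (Real.sqrt_pos.mpr (hd i)).ne')

theorem inv_diagonal_eq_inv_diagonal_sqrt_mul_self (hd : ∀ i, 0 < d i) :
    (diagonal d)⁻¹ = (diagonal fun i => √(d i))⁻¹ * (diagonal fun i => √(d i))⁻¹ := by
  rw [← Matrix.mul_inv_rev, diagonal_mul_diagonal]
  exact congrArg (fun v => (diagonal v)⁻¹) (funext fun i => (Real.mul_self_sqrt (hd i).le).symm)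

theorem norm_diagonal_sqrt_le : ‖(diagonal fun i => √(d i) : Matrix m m ℝ)‖ ≤ √(⨆ i, d i) := by
  rw [l2_opNorm_diagonal, pi_norm_le_iff_of_nonneg (Real.sqrt_nonneg _)]
  intro i
  rw [Real.norm_of_nonneg (Real.sqrt_nonneg _)]
  exact Real.sqrt_le_sqrt (le_ciSup (Finite.bddAbove_range d) i)

theorem norm_inv_diagonal_sqrt_le [Nonempty m] (hd : ∀ i, 0 < d i) :
    ‖(diagonal fun i => √(d i) : Matrix m m ℝ)⁻¹‖ ≤ (√(⨅ i, d i))⁻¹ := by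
  obtain ⟨j, hj⟩ := Finite.exists_min d
  have hinf : 0 < ⨅ i, d i := (hd j).trans_le (le_ciInf hj)
  rw [inv_diagonal_sqrt hd, l2_opNorm_diagonal,
    pi_norm_le_iff_of_nonneg (inv_nonneg.mpr (Real.sqrt_nonneg _))]
  intro i
  rw [Real.norm_of_nonneg (inv_nonneg.mpr (Real.sqrt_nonneg _))]
  exact inv_anti₀ (Real.sqrt_pos.mpr hinf)
    (Real.sqrt_le_sqrt (ciInf_le (Finite.bddBelow_range d) i))

end SqrtDiagonal

theorem a1_norm_bounds (m l : ℕ) (hl : 1 ≤ l) (hlm : l ≤ m)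
    (E : Matrix (Fin m) (Fin l) ℝ) (hrank : E.rank = l)
    (d : Fin m → ℝ) (hd : ∀ i, 0 < d i)
    (D : Matrix (Fin m) (Fin m) ℝ) (hD : D = Matrix.diagonal d)
    (A₁ : Matrix (Fin m) (Fin m) ℝ) (hA₁ : A₁ = D⁻¹ * E * (Eᵀ * D⁻¹ * E)⁻¹ * Eᵀ) :
    1 ≤ ‖A₁‖ ∧ ‖A₁‖ ≤ Real.sqrt ((⨆ i, d i) / (⨅ i, d i)) := by
  have : Nonempty (Fin l) := ⟨⟨0, hl⟩⟩
  have : Nonempty (Fin m) := ⟨⟨0, hl.trans hlm⟩⟩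
  set S : Matrix (Fin m) (Fin m) ℝ := diagonal fun i => √(d i)
  have hS : IsUnit S.det := isUnit_det_diagonal_sqrt hd
  set F := S⁻¹ * E
  have hFt : Fᴴ = Eᵀ * S⁻¹ := by
    rw [conjTranspose_mul, conjTranspose_nonsing_inv, diagonal_conjTranspose]
    simp [S]
  have hDinv : D⁻¹ = S⁻¹ * S⁻¹ := hD ▸ inv_diagonal_eq_inv_diagonal_sqrt_mul_self hd
  have hA : A₁ = obliqueProj (S⁻¹ * F) (Fᴴ * S) := by
    rw [hA₁, hDinv, hFt, obliqueProj]
    simp only [F, Matrix.mul_assoc, nonsing_inv_mul_cancel_right _ _ hS]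
  have hgram : Fᴴ * S * (S⁻¹ * F) = Fᴴ * F := by
    rw [Matrix.mul_assoc, mul_nonsing_inv_cancel_left _ _ hS]
  have hunit : IsUnit (Fᴴ * F).det := by
    rw [← isUnit_iff_isUnit_det]
    apply isUnit_of_rank_eq_card
    rw [rank_conjTranspose_mul_self, rank_mul_eq_right_of_isUnit_det _ _
      (isUnit_nonsing_inv_det _ hS), hrank, Fintype.card_fin]
  rw [hA]
  refine ⟨(isIdempotentElem_obliqueProj _ _).one_le_norm (obliqueProj_ne_zero (hgram ▸ hunit)), ?_⟩
  rw [obliqueProj_conj hS]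
  calc ‖S⁻¹ * obliqueProj F Fᴴ * S‖ ≤ ‖S⁻¹‖ * ‖obliqueProj F Fᴴ‖ * ‖S‖ := norm_mul₃_le
    _ ≤ (√(⨅ i, d i))⁻¹ * 1 * √(⨆ i, d i) := by
      gcongr
      · exact norm_inv_diagonal_sqrt_le hd
      · exact (isStarProjection_obliqueProj_conjTranspose F).norm_le
      · exact norm_diagonal_sqrt_le
    _ = √((⨆ i, d i) / ⨅ i, d i) := by
      rw [Real.sqrt_div' _ (le_ciInf fun i => (hd i).le), mul_one, inv_mul_eq_div]
end

section
/- The spectral norm of A₀ = D^{-1} E (E^t D^{-1} E)^{-1} satisfies ‖A₀‖ ≤ (1/σ_min(E^t)) · √(λ_max(D)/λ_min(D)), where σ_min(E^t) is the smallest singular value of E^t. -/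
/-!
Write `P = D⁻¹`, `B = Eᵀ P E` and, for a vector `x`, put `y = B⁻¹ x` and `w = E y`, so that
`A₀ x = P w` and `t := ⟪w, P w⟫ = ⟪y, x⟫`. The diagonal bounds on `P` give
`‖P w‖² ≤ t / λ_min(D)` and `‖w‖² ≤ λ_max(D) t`, while `σ_min(Eᵀ)² ‖y‖² ≤ ‖w‖²` is the
Rayleigh-quotient characterisation of the least eigenvalue of `Eᵀ E`. Combined with the
Cauchy–Schwarz bound `t ≤ ‖y‖ ‖x‖` this yields `t ≤ λ_max(D) ‖x‖² / σ_min(Eᵀ)²`, hence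
`‖A₀ x‖² ≤ λ_max(D) / (λ_min(D) σ_min(Eᵀ)²) ‖x‖²`.
-/

open Matrix
open scoped Matrix.Norms.L2Operator

/-- The set of singular values of a real matrix `A`, described as the nonnegative
reals `s` such that `s ^ 2` is an eigenvalue of `A * Aᵀ`. -/
def singularValueSet {a b : ℕ} (A : Matrix (Fin a) (Fin b) ℝ) : Set ℝ :=
  {s : ℝ | 0 ≤ s ∧ ∃ v : Fin a → ℝ, v ≠ 0 ∧ (A * Aᵀ).mulVec v = (s ^ 2) • v}

/-- Smallest singular value. -/
noncomputable def sigmaMin {a b : ℕ} (A : Matrix (Fin a) (Fin b) ℝ) : ℝ :=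
  sInf (singularValueSet A)

theorem LinearMap.IsSymmetric.exists_hasEigenvalue_forall_mul_le
    {E : Type*} [NormedAddCommGroup E] [InnerProductSpace ℝ E] [FiniteDimensional ℝ E]
    [Nontrivial E] {T : E →ₗ[ℝ] E} (hT : T.IsSymmetric) :
    ∃ μ, Module.End.HasEigenvalue T μ ∧ ∀ x, μ * ‖x‖ ^ 2 ≤ inner ℝ (T x) x := by
  refine ⟨_, hT.hasEigenvalue_iInf_of_finiteDimensional, fun x => ?_⟩
  rcases eq_or_ne x 0 with rfl | hx
  · simp
  have hbdd : BddBelow (Set.range fun y : {y : E // y ≠ 0} =>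
      RCLike.re (inner ℝ (T y) (y : E)) / ‖(y : E)‖ ^ 2) :=
    ⟨-‖LinearMap.toContinuousLinearMap T‖, by
      rintro _ ⟨y, rfl⟩
      exact (abs_le.mp ((LinearMap.toContinuousLinearMap T).rayleighQuotient_le_norm y)).1⟩
  simpa [le_div_iff₀ (by positivity : 0 < ‖x‖ ^ 2)] using ciInf_le hbdd ⟨x, hx⟩

theorem Matrix.IsHermitian.exists_mulVec_eq_smul_forall_mul_le {n : Type*} [Fintype n]
    [DecidableEq n] [Nonempty n] {G : Matrix n n ℝ} (hG : G.IsHermitian) :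
    ∃ μ, ∃ v ≠ 0, G *ᵥ v = μ • v ∧ ∀ y, μ * (y ⬝ᵥ y) ≤ y ⬝ᵥ (G *ᵥ y) := by
  obtain ⟨μ, hμ, hle⟩ :=
    (isSymmetric_toEuclideanLin_iff.mpr hG).exists_hasEigenvalue_forall_mul_le
  obtain ⟨v, hv⟩ := hμ.exists_hasEigenvector
  refine ⟨μ, WithLp.ofLp v, by simpa using hv.2, congrArg WithLp.ofLp hv.apply_eq_smul,
    fun y => ?_⟩
  have : μ * ‖WithLp.toLp 2 y‖ ^ 2 ≤ inner ℝ (WithLp.toLp 2 (G *ᵥ y)) (WithLp.toLp 2 y) :=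
    hle _
  rwa [← real_inner_self_eq_norm_sq, EuclideanSpace.inner_toLp_toLp,
    EuclideanSpace.inner_toLp_toLp, star_trivial, star_trivial] at this

theorem Matrix.mulVec_injective_of_rank_eq {K m n : Type*} [Field K] [Fintype m] [Fintype n]
    {A : Matrix m n K} (hA : A.rank = Fintype.card n) : Function.Injective A.mulVec := by
  have h := LinearMap.finrank_range_add_finrank_ker A.mulVecLin
  rw [Module.finrank_fintype_fun_eq_card, ← Matrix.rank, hA, add_eq_left,
    Submodule.finrank_eq_zero, LinearMap.ker_eq_bot] at h
  exact h

section DotProduct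

variable {ι κ : Type*} [Fintype ι] [Fintype κ]

lemma dotProduct_self_nonneg (v : ι → ℝ) : 0 ≤ v ⬝ᵥ v := by
  simpa using dotProduct_star_self_nonneg v

lemma dotProduct_self_pos {v : ι → ℝ} (hv : v ≠ 0) : 0 < v ⬝ᵥ v := by
  simpa using dotProduct_star_self_pos_iff.mpr hv

lemma dotProduct_sq_le (u v : ι → ℝ) : (u ⬝ᵥ v) ^ 2 ≤ (u ⬝ᵥ u) * (v ⬝ᵥ v) := by
  simpa [dotProduct, sq] using Finset.sum_mul_sq_le_sq_mul_sq Finset.univ u v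

lemma dotProduct_transpose_mul_self_mulVec (E : Matrix ι κ ℝ) (y : κ → ℝ) :
    y ⬝ᵥ ((Eᵀ * E) *ᵥ y) = (E *ᵥ y) ⬝ᵥ (E *ᵥ y) := by
  rw [← mulVec_mulVec, dotProduct_transpose_mulVec]

theorem l2_opNorm_le_of_forall_dotProduct_le [DecidableEq κ] {A : Matrix ι κ ℝ} {C : ℝ}
    (hC : 0 ≤ C) (h : ∀ x, (A *ᵥ x) ⬝ᵥ (A *ᵥ x) ≤ C ^ 2 * (x ⬝ᵥ x)) : ‖A‖ ≤ C := by
  rw [l2_opNorm_def]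
  refine ContinuousLinearMap.opNorm_le_bound _ hC fun x => ?_
  refine (sq_le_sq₀ (norm_nonneg _) (by positivity)).mp ?_
  rw [mul_pow, ← real_inner_self_eq_norm_sq, ← real_inner_self_eq_norm_sq,
    EuclideanSpace.inner_eq_star_dotProduct, EuclideanSpace.inner_eq_star_dotProduct,
    star_trivial, star_trivial]
  exact h (WithLp.ofLp x)

end DotProduct

section SigmaMin

variable {m l : ℕ} (E : Matrix (Fin m) (Fin l) ℝ)

lemma mul_dotProduct_self_eq_of_transpose_mul_self_mulVec {μ : ℝ} {v : Fin l → ℝ}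
    (hμv : (Eᵀ * E) *ᵥ v = μ • v) : μ * (v ⬝ᵥ v) = (E *ᵥ v) ⬝ᵥ (E *ᵥ v) := by
  rw [← dotProduct_transpose_mul_self_mulVec, hμv, dotProduct_smul, smul_eq_mul]

lemma nonneg_of_transpose_mul_self_mulVec_eq_smul {μ : ℝ} {v : Fin l → ℝ} (hv : v ≠ 0)
    (hμv : (Eᵀ * E) *ᵥ v = μ • v) : 0 ≤ μ := by
  have := mul_dotProduct_self_eq_of_transpose_mul_self_mulVec E hμv
  exact nonneg_of_mul_nonneg_left (this ▸ dotProduct_self_nonneg _) (dotProduct_self_pos hv)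

theorem sigmaMin_transpose_eq_sqrt {μ : ℝ} {v : Fin l → ℝ} (hv : v ≠ 0)
    (hμv : (Eᵀ * E) *ᵥ v = μ • v) (hμ : ∀ y, μ * (y ⬝ᵥ y) ≤ (E *ᵥ y) ⬝ᵥ (E *ᵥ y)) :
    sigmaMin Eᵀ = √μ := by
  refine IsLeast.csInf_eq ⟨⟨Real.sqrt_nonneg μ, v, hv, ?_⟩, ?_⟩
  · rwa [transpose_transpose, Real.sq_sqrt (nonneg_of_transpose_mul_self_mulVec_eq_smul E hv hμv)]
  rintro s ⟨hs, w, hw, hsw⟩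
  rw [transpose_transpose] at hsw
  refine Real.sqrt_le_iff.mpr ⟨hs, le_of_mul_le_mul_right ?_ (dotProduct_self_pos hw)⟩
  exact (hμ w).trans (mul_dotProduct_self_eq_of_transpose_mul_self_mulVec E hsw).ge

theorem exists_transpose_mul_self_mulVec_eq_smul [Nonempty (Fin l)] :
    ∃ μ, ∃ v ≠ 0, (Eᵀ * E) *ᵥ v = μ • v ∧ ∀ y, μ * (y ⬝ᵥ y) ≤ (E *ᵥ y) ⬝ᵥ (E *ᵥ y) := by
  have hG : (Eᵀ * E).IsHermitian := by
    simpa [conjTranspose_eq_transpose_of_trivial] using isHermitian_conjTranspose_mul_self E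
  simpa only [dotProduct_transpose_mul_self_mulVec] using
    hG.exists_mulVec_eq_smul_forall_mul_le

theorem sq_sigmaMin_transpose_mul_le [Nonempty (Fin l)] (y : Fin l → ℝ) :
    sigmaMin Eᵀ ^ 2 * (y ⬝ᵥ y) ≤ (E *ᵥ y) ⬝ᵥ (E *ᵥ y) := by
  obtain ⟨μ, v, hv, hμv, hμ⟩ := exists_transpose_mul_self_mulVec_eq_smul E
  rw [sigmaMin_transpose_eq_sqrt E hv hμv hμ,
    Real.sq_sqrt (nonneg_of_transpose_mul_self_mulVec_eq_smul E hv hμv)]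
  exact hμ y

theorem sigmaMin_transpose_pos [Nonempty (Fin l)] (hE : Function.Injective E.mulVec) :
    0 < sigmaMin Eᵀ := by
  obtain ⟨μ, v, hv, hμv, hμ⟩ := exists_transpose_mul_self_mulVec_eq_smul E
  rw [sigmaMin_transpose_eq_sqrt E hv hμv hμ, Real.sqrt_pos]
  have hEv : E *ᵥ v ≠ 0 := fun h => hv (hE (h.trans (mulVec_zero E).symm))
  have := mul_dotProduct_self_eq_of_transpose_mul_self_mulVec E hμv
  exact pos_of_mul_pos_left (this ▸ dotProduct_self_pos hEv) (dotProduct_self_pos hv).le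

end SigmaMin

section Diagonal

variable {ι : Type*} [Fintype ι] [DecidableEq ι] {e : ι → ℝ}

theorem inv_diagonal_of_ne_zero {d : ι → ℝ} (hd : ∀ i, d i ≠ 0) :
    (diagonal d)⁻¹ = diagonal d⁻¹ :=
  inv_eq_left_inv <| by rw [diagonal_mul_diagonal]; simp [hd]

lemma dotProduct_self_le_mul_dotProduct_diagonal_mulVec {α : ℝ} (he : ∀ i, 1 ≤ α * e i)
    (w : ι → ℝ) : w ⬝ᵥ w ≤ α * (w ⬝ᵥ (diagonal e *ᵥ w)) := by
  simp only [dotProduct, mulVec_diagonal, Finset.mul_sum]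
  exact Finset.sum_le_sum fun i _ => by nlinarith [he i, mul_self_nonneg (w i)]

lemma diagonal_mulVec_dotProduct_self_le {β : ℝ} (he₀ : ∀ i, 0 ≤ e i) (he : ∀ i, e i ≤ β)
    (w : ι → ℝ) : (diagonal e *ᵥ w) ⬝ᵥ (diagonal e *ᵥ w) ≤ β * (w ⬝ᵥ (diagonal e *ᵥ w)) := by
  simp only [dotProduct, mulVec_diagonal, Finset.mul_sum]
  exact Finset.sum_le_sum fun i _ => by
    nlinarith [mul_le_mul_of_nonneg_right (he i) (mul_nonneg (he₀ i) (mul_self_nonneg (w i)))]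

end Diagonal

section WeightedPseudoinverse

variable {ι κ : Type*} [Fintype ι] [Fintype κ] {P : Matrix ι ι ℝ} {E : Matrix ι κ ℝ}
  {α β σ : ℝ}

theorem mulVec_dotProduct_self_le_mul_dotProduct_self (hα : 0 ≤ α) (hβ : 0 ≤ β) (hσ : 0 < σ)
    (hE : ∀ y, σ ^ 2 * (y ⬝ᵥ y) ≤ (E *ᵥ y) ⬝ᵥ (E *ᵥ y))
    (hPα : ∀ w, w ⬝ᵥ w ≤ α * (w ⬝ᵥ (P *ᵥ w)))
    (hPβ : ∀ w, (P *ᵥ w) ⬝ᵥ (P *ᵥ w) ≤ β * (w ⬝ᵥ (P *ᵥ w))) (y : κ → ℝ) :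
    ((P * E) *ᵥ y) ⬝ᵥ ((P * E) *ᵥ y) ≤
      α * β / σ ^ 2 * (((Eᵀ * P * E) *ᵥ y) ⬝ᵥ ((Eᵀ * P * E) *ᵥ y)) := by
  set x := (Eᵀ * P * E) *ᵥ y
  set w := E *ᵥ y
  set t := w ⬝ᵥ (P *ᵥ w)
  have ht : t = y ⬝ᵥ x := by
    simp only [t, w, x, ← mulVec_mulVec, dotProduct_transpose_mulVec, dotProduct_comm]
  have hyt : σ ^ 2 * (y ⬝ᵥ y) ≤ α * t := (hE y).trans (hPα w)
  have hCS : t ^ 2 ≤ (y ⬝ᵥ y) * (x ⬝ᵥ x) := ht ▸ dotProduct_sq_le y x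
  have htx : σ ^ 2 * t ≤ α * (x ⬝ᵥ x) := by
    rcases le_or_gt t 0 with ht₀ | ht₀
    · nlinarith [dotProduct_self_nonneg x]
    refine le_of_mul_le_mul_right ?_ ht₀
    nlinarith [mul_le_mul_of_nonneg_right hyt (dotProduct_self_nonneg x)]
  rw [← mulVec_mulVec]
  calc (P *ᵥ w) ⬝ᵥ (P *ᵥ w) ≤ β * t := hPβ w
    _ ≤ β * (α * (x ⬝ᵥ x) / σ ^ 2) := by gcongr; rw [le_div_iff₀ (by positivity)]; linarith
    _ = α * β / σ ^ 2 * (x ⬝ᵥ x) := by ring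

theorem l2_opNorm_mul_mul_inv_le [DecidableEq κ] (hα : 0 ≤ α) (hβ : 0 ≤ β) (hσ : 0 < σ)
    (hE : ∀ y, σ ^ 2 * (y ⬝ᵥ y) ≤ (E *ᵥ y) ⬝ᵥ (E *ᵥ y))
    (hPα : ∀ w, w ⬝ᵥ w ≤ α * (w ⬝ᵥ (P *ᵥ w)))
    (hPβ : ∀ w, (P *ᵥ w) ⬝ᵥ (P *ᵥ w) ≤ β * (w ⬝ᵥ (P *ᵥ w)))
    (hB : IsUnit (Eᵀ * P * E)) :
    ‖P * E * (Eᵀ * P * E)⁻¹‖ ≤ √(α * β) / σ := by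
  refine l2_opNorm_le_of_forall_dotProduct_le (by positivity) fun x => ?_
  have hx : (Eᵀ * P * E) *ᵥ ((Eᵀ * P * E)⁻¹ *ᵥ x) = x := by
    rw [mulVec_mulVec, mul_nonsing_inv _ ((isUnit_iff_isUnit_det _).mp hB), one_mulVec]
  rw [← mulVec_mulVec, div_pow, Real.sq_sqrt (by positivity)]
  simpa only [hx] using
    mulVec_dotProduct_self_le_mul_dotProduct_self hα hβ hσ hE hPα hPβ ((Eᵀ * P * E)⁻¹ *ᵥ x)

end WeightedPseudoinverse

theorem a0_norm_le (m l : ℕ) (hl : 1 ≤ l) (hlm : l ≤ m)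
    (E : Matrix (Fin m) (Fin l) ℝ) (hrank : E.rank = l)
    (d : Fin m → ℝ) (hd : ∀ i, 0 < d i)
    (D : Matrix (Fin m) (Fin m) ℝ) (hD : D = Matrix.diagonal d)
    (A₀ : Matrix (Fin m) (Fin l) ℝ) (hA₀ : A₀ = D⁻¹ * E * (Eᵀ * D⁻¹ * E)⁻¹) :
    ‖A₀‖ ≤ (1 / sigmaMin Eᵀ) * Real.sqrt ((⨆ i, d i) / (⨅ i, d i)) := by
  subst hD hA₀
  have : Nonempty (Fin l) := ⟨⟨0, hl⟩⟩
  have : Nonempty (Fin m) := ⟨⟨0, Nat.lt_of_lt_of_le hl hlm⟩⟩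
  have hE : Function.Injective E.mulVec := mulVec_injective_of_rank_eq (by simpa using hrank)
  have hda (i) : d i ≤ ⨆ i, d i := le_ciSup (Finite.bddAbove_range d) i
  have hdb (i) : ⨅ i, d i ≤ d i := ciInf_le (Finite.bddBelow_range d) i
  obtain ⟨i₀, hi₀⟩ := Finite.exists_min d
  have hb : 0 < ⨅ i, d i := (hd i₀).trans_le (le_ciInf hi₀)
  have hPα (i) : 1 ≤ (⨆ i, d i) * d⁻¹ i := by
    simpa [← div_eq_mul_inv, one_le_div₀ (hd i)] using hda i
  have hPβ (i) : d⁻¹ i ≤ (⨅ i, d i)⁻¹ := inv_anti₀ hb (hdb i)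
  have hP : (diagonal d⁻¹).PosDef := posDef_diagonal_iff.mpr fun i => inv_pos.mpr (hd i)
  have hB : IsUnit (Eᵀ * diagonal d⁻¹ * E) := by
    simpa [conjTranspose_eq_transpose_of_trivial] using
      (hP.conjTranspose_mul_mul_same hE).isUnit
  rw [inv_diagonal_of_ne_zero fun i => (hd i).ne']
  refine (l2_opNorm_mul_mul_inv_le ((hd i₀).le.trans (hda i₀)) (inv_nonneg.mpr hb.le)
    (sigmaMin_transpose_pos E hE) (sq_sigmaMin_transpose_mul_le E)
    (dotProduct_self_le_mul_dotProduct_diagonal_mulVec hPα)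
    (diagonal_mulVec_dotProduct_self_le (fun i => (inv_pos.mpr (hd i)).le) hPβ) hB).trans_eq ?_
  rw [div_eq_mul_inv (⨆ i, d i)]
  ring
end
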